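/- For any Boolean function f : {-1,1}^n → {-1,1} with I[f] < 1, Var(f) ≤ 2 · I[f] / log₂(1/I[f]). -/

import Mathlib

open Finset Real

noncomputable def chi {n : ℕ} (S : Finset (Fin n)) (x : Fin n → Bool) : ℝ :=
  ∏ i ∈ S, (if x i then (1:ℝ) else -1)

noncomputable def coeff {n : ℕ} (f : (Fin n → Bool) → ℝ) (S : Finset (Fin n)) : ℝ :=
  (∑ x : Fin n → Bool, f x * chi S x) / 2 ^ n

noncomputable def spectralEntropy {n : ℕ} (f : (Fin n → Bool) → ℝ) : ℝ :=
  ∑ S : Finset (Fin n), (coeff f S) ^ 2 * Real.logb 2 (1 / (coeff f S) ^ 2)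

noncomputable def totalInfluence {n : ℕ} (f : (Fin n → Bool) → ℝ) : ℝ :=
  ∑ S : Finset (Fin n), (S.card : ℝ) * (coeff f S) ^ 2

noncomputable def minEntropy {n : ℕ} (f : (Fin n → Bool) → ℝ) : ℝ :=
  ⨅ S : Finset (Fin n), Real.logb 2 (1 / (coeff f S) ^ 2)

noncomputable def fVar {n : ℕ} (f : (Fin n → Bool) → ℝ) : ℝ := 1 - (coeff f ∅) ^ 2

def IsBoolean {n : ℕ} (f : (Fin n → Bool) → ℝ) : Prop := ∀ x, f x = 1 ∨ f x = -1

noncomputable def binEnt (x : ℝ) : ℝ :=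
  x * Real.logb 2 (1 / x) + (1 - x) * Real.logb 2 (1 / (1 - x))

noncomputable def l1Norm {n : ℕ} (f : (Fin n → Bool) → ℝ) : ℝ :=
  ∑ S : Finset (Fin n), |coeff f S|

noncomputable def tensor {n m : ℕ} (f : (Fin n → Bool) → ℝ) (g : (Fin m → Bool) → ℝ) :
    (Fin (n + m) → Bool) → ℝ :=
  fun x => f (fun i => x (Fin.castAdd m i)) * g (fun j => x (Fin.natAdd n j))

/-!
Let `β = min (Pr[f = -1]) (Pr[f = 1])`, so that `Var f = 4β(1 - β)`. The edge isoperimetric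
inequality `2β log₂(1/β) ≤ I[f]` is proved by induction on `n`: splitting off the first
coordinate, `I[f]` is the mean of the influences of the two restrictions `f₀, f₁` plus
`‖(f₁ - f₀)/2‖₂²`, and since `(f₁ - f₀)/2` takes values in `{-1, 0, 1}` this is at least
`|β₀ - β₁|`. The inductive step is then the entropy inequality
`2η((a + b)/2) ≤ η(a) + η(b) + |a - b| log 2` for `η(x) = -x log x`, which is the concavity of
the binary entropy between `0` and `1/2`. Finally `Var f ≤ I[f] < 1` gives
`Var · log₂(1/I) ≤ Var · log₂(1/Var) ≤ 4β log₂(1/β) ≤ 2 I[f]`.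
-/

section Fourier

variable {n : ℕ}

lemma coeff_empty (f : (Fin n → Bool) → ℝ) : coeff f ∅ = (∑ x, f x) / 2 ^ n := by
  simp [coeff, chi]

lemma sum_chi_mul_chi (x y : Fin n → Bool) :
    ∑ S : Finset (Fin n), chi S x * chi S y = if x = y then 2 ^ n else 0 := by
  have hprod : ∑ S : Finset (Fin n), chi S x * chi S y
      = ∏ i, ((if x i then (1 : ℝ) else -1) * (if y i then 1 else -1) + 1) := by
    rw [prod_add, powerset_univ]
    refine sum_congr rfl fun S _ => ?_
    simp [chi, ← prod_mul_distrib]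
  rw [hprod]
  split_ifs with hxy
  · subst hxy
    have h2 : ∀ i, (if x i then (1 : ℝ) else -1) * (if x i then 1 else -1) + 1 = 2 := by
      intro i; cases x i <;> norm_num
    rw [prod_congr rfl fun i _ => h2 i, prod_const, card_univ, Fintype.card_fin]
  · obtain ⟨i, hi⟩ : ∃ i, x i ≠ y i := Function.ne_iff.mp hxy
    apply prod_eq_zero (mem_univ i)
    cases hx : x i <;> cases hy : y i <;> simp_all

lemma sum_coeff_mul_chi (f : (Fin n → Bool) → ℝ) (x : Fin n → Bool) :
    ∑ S : Finset (Fin n), coeff f S * chi S x = f x := by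
  simp only [coeff, div_mul_eq_mul_div, sum_mul, ← sum_div]
  rw [sum_comm]
  simp_rw [mul_assoc, ← mul_sum, sum_chi_mul_chi, mul_ite, mul_zero, sum_ite_eq']
  simp

lemma sum_coeff_sq (f : (Fin n → Bool) → ℝ) :
    ∑ S : Finset (Fin n), coeff f S ^ 2 = (∑ x, f x ^ 2) / 2 ^ n := by
  have h : ∀ S : Finset (Fin n), coeff f S ^ 2 = (∑ x, f x * (coeff f S * chi S x)) / 2 ^ n := by
    intro S
    simp_rw [mul_left_comm (f _), ← mul_sum]
    rw [coeff]
    ring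
  simp_rw [h, ← sum_div, sum_comm (γ := Finset (Fin n)), ← mul_sum, sum_coeff_mul_chi, sq]

lemma coeff_neg (f : (Fin n → Bool) → ℝ) (S : Finset (Fin n)) :
    coeff (-f) S = -coeff f S := by
  simp [coeff, neg_div]

lemma abs_coeff_empty_le_sum_coeff_sq {g : (Fin n → Bool) → ℝ} (hg : ∀ x, |g x| ≤ g x ^ 2) :
    |coeff g ∅| ≤ ∑ S : Finset (Fin n), coeff g S ^ 2 := by
  rw [coeff_empty, sum_coeff_sq, abs_div, abs_of_pos (a := (2 : ℝ) ^ n) (by positivity)]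
  gcongr ?_ / _
  exact (abs_sum_le_sum_abs _ _).trans (sum_le_sum fun x _ => hg x)

lemma totalInfluence_nonneg (f : (Fin n → Bool) → ℝ) : 0 ≤ totalInfluence f := by
  unfold totalInfluence
  positivity

lemma totalInfluence_neg (f : (Fin n → Bool) → ℝ) : totalInfluence (-f) = totalInfluence f := by
  simp [totalInfluence, coeff_neg]

namespace IsBoolean

variable {f : (Fin n → Bool) → ℝ}

lemma neg (hf : IsBoolean f) : IsBoolean (-f) := fun x => by
  rcases hf x with h | h <;> simp [h]

lemma sum_coeff_sq (hf : IsBoolean f) : ∑ S : Finset (Fin n), coeff f S ^ 2 = 1 := by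
  have h : ∀ x, f x ^ 2 = 1 := fun x => by rcases hf x with h | h <;> simp [h]
  simp [_root_.sum_coeff_sq, h]

lemma abs_coeff_le_one (hf : IsBoolean f) (S : Finset (Fin n)) : |coeff f S| ≤ 1 := by
  rw [← sq_le_one_iff_abs_le_one, ← hf.sum_coeff_sq]
  exact single_le_sum (fun T _ => sq_nonneg (coeff f T)) (mem_univ S)

lemma fVar_le_totalInfluence (hf : IsBoolean f) : fVar f ≤ totalInfluence f := by
  have hvar : fVar f = ∑ S ∈ univ.erase ∅, coeff f S ^ 2 := by
    rw [fVar, ← hf.sum_coeff_sq, ← add_sum_erase univ _ (mem_univ ∅)]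
    ring
  rw [hvar, totalInfluence, ← add_sum_erase univ _ (mem_univ ∅)]
  simp only [card_empty, Nat.cast_zero, zero_mul, zero_add]
  refine sum_le_sum fun S hS => le_mul_of_one_le_left (sq_nonneg _) ?_
  exact_mod_cast card_pos.mpr (nonempty_iff_ne_empty.mpr (ne_of_mem_erase hS))

end IsBoolean

end Fourier

lemma Finset.powerset_map {α β : Type*} (s : Finset α) (e : α ↪ β) :
    (s.map e).powerset = s.powerset.map (mapEmbedding e).toEmbedding := by
  ext t
  simp [subset_map_iff, eq_comm]

section HeadCoordinate

variable {n : ℕ}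

lemma sum_fun_fin_succ {M : Type*} [AddCommMonoid M] (F : (Fin (n + 1) → Bool) → M) :
    ∑ x, F x = ∑ y, F (Fin.cons false y) + ∑ y, F (Fin.cons true y) := by
  rw [← (Fin.consEquiv fun _ => Bool).sum_comp, Fintype.sum_prod_type, Fintype.sum_bool, add_comm]
  rfl

lemma sum_finset_fin_succ {M : Type*} [AddCommMonoid M] (F : Finset (Fin (n + 1)) → M) :
    ∑ T, F T = ∑ S : Finset (Fin n), F (S.map (Fin.succEmb n))
      + ∑ S : Finset (Fin n), F (insert 0 (S.map (Fin.succEmb n))) := by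
  rw [← powerset_univ, Fin.univ_succ, cons_eq_insert, sum_powerset_insert (by simp),
    Finset.powerset_map, sum_map, sum_map, powerset_univ]
  rfl

lemma chi_map_succ_cons (S : Finset (Fin n)) (b : Bool) (y : Fin n → Bool) :
    chi (S.map (Fin.succEmb n)) (Fin.cons b y) = chi S y := by
  simp [chi]

lemma chi_insert_zero_map_succ_cons (S : Finset (Fin n)) (b : Bool) (y : Fin n → Bool) :
    chi (insert 0 (S.map (Fin.succEmb n))) (Fin.cons b y) = (if b then 1 else -1) * chi S y := by
  rw [chi, prod_insert (by simp), Fin.cons_zero, ← chi_map_succ_cons S b y, chi]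

noncomputable def restrictHead (f : (Fin (n + 1) → Bool) → ℝ) (b : Bool) : (Fin n → Bool) → ℝ :=
  fun y => f (Fin.cons b y)

noncomputable def headDeriv (f : (Fin (n + 1) → Bool) → ℝ) : (Fin n → Bool) → ℝ :=
  fun y => (f (Fin.cons true y) - f (Fin.cons false y)) / 2

variable (f : (Fin (n + 1) → Bool) → ℝ)

lemma coeff_headDeriv (S : Finset (Fin n)) :
    coeff (headDeriv f) S =
      (coeff (restrictHead f true) S - coeff (restrictHead f false) S) / 2 := by
  simp only [coeff, headDeriv, restrictHead, div_mul_eq_mul_div, ← sum_div, sub_mul,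
    sum_sub_distrib]
  ring

lemma coeff_map_succ (S : Finset (Fin n)) :
    coeff f (S.map (Fin.succEmb n)) =
      (coeff (restrictHead f false) S + coeff (restrictHead f true) S) / 2 := by
  simp only [coeff, restrictHead, sum_fun_fin_succ fun x => f x * chi _ x, chi_map_succ_cons]
  rw [pow_succ]
  field_simp

lemma coeff_insert_zero_map_succ (S : Finset (Fin n)) :
    coeff f (insert 0 (S.map (Fin.succEmb n))) = coeff (headDeriv f) S := by
  simp only [coeff, headDeriv, sum_fun_fin_succ fun x => f x * chi _ x,
    chi_insert_zero_map_succ_cons, div_mul_eq_mul_div, ← sum_div, sub_mul, sum_sub_distrib]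
  simp only [Bool.false_eq_true, if_false, if_true, neg_one_mul, one_mul, mul_neg, sum_neg_distrib]
  rw [pow_succ]
  field_simp
  ring

lemma totalInfluence_fin_succ :
    totalInfluence f = (totalInfluence (restrictHead f false)
      + totalInfluence (restrictHead f true)) / 2 + ∑ S, coeff (headDeriv f) S ^ 2 := by
  have hcard (S : Finset (Fin n)) : #(insert 0 (S.map (Fin.succEmb n))) = #S + 1 := by
    rw [card_insert_of_notMem (by simp), card_map]
  simp only [totalInfluence, sum_finset_fin_succ fun T => (#T : ℝ) * coeff f T ^ 2,
    coeff_map_succ, coeff_insert_zero_map_succ, card_map, hcard, coeff_headDeriv,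
    ← sum_add_distrib, sum_div]
  refine sum_congr rfl fun S _ => ?_
  push_cast
  ring

variable {f : (Fin (n + 1) → Bool) → ℝ}

lemma IsBoolean.restrictHead (hf : IsBoolean f) (b : Bool) : IsBoolean (restrictHead f b) :=
  fun _ => hf _

lemma IsBoolean.abs_headDeriv_le_sq (hf : IsBoolean f) (y : Fin n → Bool) :
    |headDeriv f y| ≤ headDeriv f y ^ 2 := by
  rcases hf (Fin.cons true y) with h1 | h1 <;> rcases hf (Fin.cons false y) with h0 | h0 <;>
    norm_num [headDeriv, h0, h1]

end HeadCoordinate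

section Entropy

lemma two_mul_mul_log_two_le_binEntropy {p : ℝ} (hp₀ : 0 ≤ p) (hp : p ≤ 2⁻¹) :
    2 * p * log 2 ≤ binEntropy p := by
  have h := strictConcave_binEntropy.concaveOn.2 (Set.left_mem_Icc.mpr zero_le_one)
    (show (2⁻¹ : ℝ) ∈ Set.Icc 0 1 by norm_num) (show 0 ≤ 1 - 2 * p by linarith)
    (show 0 ≤ 2 * p by linarith) (by ring)
  simp only [smul_eq_mul, mul_zero, zero_add, binEntropy_zero, binEntropy_two_inv] at h
  rw [mul_comm 2 p, mul_inv_cancel_right₀ two_ne_zero] at h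
  linarith

lemma two_mul_mul_log_two_le_negMulLog_add_negMulLog {a b : ℝ} (hb : 0 ≤ b) (hba : b ≤ a) :
    2 * b * log 2 ≤ negMulLog a + negMulLog b - negMulLog (a + b) := by
  rcases (add_nonneg (hb.trans hba) hb).eq_or_lt with hs | hs
  · have hb0 : b = 0 := by linarith
    have ha0 : a = 0 := by linarith
    simp [ha0, hb0]
  set p := b / (a + b) with hp_def
  have hbp : b = (a + b) * p := by rw [hp_def, mul_div_cancel₀ _ hs.ne']
  have hap : a = (a + b) * (1 - p) := by rw [mul_one_sub, ← hbp]; ring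
  have hp : p ≤ 2⁻¹ := by
    rw [div_le_iff₀ hs]
    linarith
  have hent : negMulLog a + negMulLog b - negMulLog (a + b) = (a + b) * binEntropy p := by
    rw [binEntropy_eq_negMulLog_add_negMulLog_one_sub]
    nth_rewrite 1 [hap]
    nth_rewrite 2 [hbp]
    rw [negMulLog_mul, negMulLog_mul]
    ring
  rw [hent]
  calc 2 * b * log 2 = (a + b) * (2 * p * log 2) := by nth_rewrite 1 [hbp]; ring
    _ ≤ (a + b) * binEntropy p :=
      mul_le_mul_of_nonneg_left (two_mul_mul_log_two_le_binEntropy (by positivity) hp) hs.le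

lemma two_mul_negMulLog_midpoint_le {a b : ℝ} (ha : 0 ≤ a) (hb : 0 ≤ b) :
    2 * negMulLog ((a + b) / 2) ≤ negMulLog a + negMulLog b + |a - b| * log 2 := by
  have hmid : 2 * negMulLog ((a + b) / 2) = negMulLog (a + b) + (a + b) * log 2 := by
    rw [div_eq_mul_inv, negMulLog_mul]
    simp only [negMulLog, log_inv]
    ring
  rw [hmid]
  rcases le_total b a with hba | hab
  · have := two_mul_mul_log_two_le_negMulLog_add_negMulLog hb hba
    rw [abs_of_nonneg (sub_nonneg.mpr hba)]
    linarith
  · have := two_mul_mul_log_two_le_negMulLog_add_negMulLog ha hab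
    rw [abs_of_nonpos (sub_nonpos.mpr hab), add_comm b a] at *
    linarith

lemma negMulLog_four_mul_mul_one_sub_le {β : ℝ} (hβ₀ : 0 ≤ β) (hβ : β ≤ 2⁻¹) :
    negMulLog (4 * β * (1 - β)) ≤ 4 * negMulLog β := by
  have hneg : negMulLog (4 * (1 - β)) ≤ 0 := by
    rw [negMulLog, neg_mul, neg_nonpos]
    exact mul_nonneg (by linarith) (log_nonneg (by linarith))
  have hpos : 0 ≤ negMulLog β := negMulLog_nonneg hβ₀ (by linarith)
  rw [mul_comm 4 β, mul_assoc, negMulLog_mul]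
  nlinarith [mul_nonneg hβ₀ (neg_nonneg.mpr hneg)]

end Entropy

theorem two_mul_negMulLog_le_log_two_mul_totalInfluence :
    ∀ {n : ℕ} {f : (Fin n → Bool) → ℝ}, IsBoolean f →
      2 * negMulLog ((1 - coeff f ∅) / 2) ≤ log 2 * totalInfluence f
  | 0, f, hf => by
    have hI : totalInfluence f = 0 := by
      simp [totalInfluence, Subsingleton.elim _ (∅ : Finset (Fin 0))]
    have hμ : coeff f ∅ = f default := by
      rw [coeff_empty, Fintype.sum_unique, pow_zero, div_one]
      exact congrArg f (Subsingleton.elim _ _)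
    rw [hI, hμ]
    rcases hf default with h | h <;> rw [h] <;> norm_num
  | n + 1, f, hf => by
    have ih (b : Bool) := two_mul_negMulLog_le_log_two_mul_totalInfluence (hf.restrictHead b)
    set β₀ := (1 - coeff (restrictHead f false) ∅) / 2
    set β₁ := (1 - coeff (restrictHead f true) ∅) / 2
    have hβ : (1 - coeff f ∅) / 2 = (β₀ + β₁) / 2 := by
      rw [← map_empty (Fin.succEmb n), coeff_map_succ]
      ring
    have hD : |β₀ - β₁| ≤ ∑ S, coeff (headDeriv f) S ^ 2 := by
      have hmean : coeff (headDeriv f) ∅ = β₀ - β₁ := by rw [coeff_headDeriv]; ring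
      exact hmean ▸ abs_coeff_empty_le_sum_coeff_sq hf.abs_headDeriv_le_sq
    have hβ_nonneg (b : Bool) : 0 ≤ (1 - coeff (restrictHead f b) ∅) / 2 := by
      linarith [le_abs_self (coeff (restrictHead f b) ∅), (hf.restrictHead b).abs_coeff_le_one ∅]
    rw [hβ, totalInfluence_fin_succ]
    calc 2 * negMulLog ((β₀ + β₁) / 2) ≤ negMulLog β₀ + negMulLog β₁ + |β₀ - β₁| * log 2 :=
          two_mul_negMulLog_midpoint_le (hβ_nonneg false) (hβ_nonneg true)
      _ ≤ _ := by nlinarith [ih false, ih true, log_pos one_lt_two]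

theorem two_mul_negMulLog_min_le_log_two_mul_totalInfluence {n : ℕ}
    {f : (Fin n → Bool) → ℝ} (hf : IsBoolean f) :
    2 * negMulLog (min ((1 - coeff f ∅) / 2) ((1 + coeff f ∅) / 2)) ≤ log 2 * totalInfluence f := by
  rcases min_choice ((1 - coeff f ∅) / 2) ((1 + coeff f ∅) / 2) with h | h <;> rw [h]
  · exact two_mul_negMulLog_le_log_two_mul_totalInfluence hf
  · simpa [coeff_neg, totalInfluence_neg] using
      two_mul_negMulLog_le_log_two_mul_totalInfluence hf.neg

lemma four_mul_mul_one_sub_le_two_mul_div_logb {β I : ℝ} (hβ₀ : 0 ≤ β) (hβ : β ≤ 2⁻¹)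
    (hβI : 4 * β * (1 - β) ≤ I) (hiso : 2 * negMulLog β ≤ log 2 * I) (hI : I < 1) :
    4 * β * (1 - β) ≤ 2 * (I / logb 2 (1 / I)) := by
  have hV₀ : 0 ≤ 4 * β * (1 - β) := by nlinarith
  rcases (hV₀.trans hβI).eq_or_lt with hI0 | hIpos
  · simp [← hI0, hβI.trans_eq hI0.symm]
  have hL : 0 < logb 2 (1 / I) := logb_pos one_lt_two ((one_lt_div hIpos).mpr hI)
  rw [← mul_div_assoc, le_div_iff₀ hL]
  rcases hV₀.eq_or_lt with hV0 | hVpos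
  · simp [← hV0, hIpos.le]
  calc 4 * β * (1 - β) * logb 2 (1 / I)
      ≤ 4 * β * (1 - β) * logb 2 (1 / (4 * β * (1 - β))) := by gcongr; exact one_lt_two
    _ = negMulLog (4 * β * (1 - β)) / log 2 := by
      rw [negMulLog, logb, one_div, log_inv]; ring
    _ ≤ 4 * negMulLog β / log 2 := by gcongr; exact negMulLog_four_mul_mul_one_sub_le hβ₀ hβ
    _ ≤ 2 * I := by rw [div_le_iff₀ (log_pos one_lt_two)]; linarith

theorem var_le_influence_over_log {n : ℕ} (f : (Fin n → Bool) → ℝ) (hf : IsBoolean f)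
    (hI : totalInfluence f < 1) :
    fVar f ≤ 2 * (totalInfluence f / Real.logb 2 (1 / totalInfluence f)) := by
  have hμ := hf.abs_coeff_le_one ∅
  obtain ⟨β, hβ_def⟩ : ∃ β, β = min ((1 - coeff f ∅) / 2) ((1 + coeff f ∅) / 2) := ⟨_, rfl⟩
  have hV : fVar f = 4 * β * (1 - β) := by
    rcases min_choice ((1 - coeff f ∅) / 2) ((1 + coeff f ∅) / 2) with h | h <;>
      rw [fVar, hβ_def, h] <;> ring
  have hβ₀ : 0 ≤ β := hβ_def ▸ le_min (by linarith [le_abs_self (coeff f ∅)])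
    (by linarith [neg_abs_le (coeff f ∅)])
  have hβ : β ≤ 2⁻¹ := by
    rw [hβ_def, min_le_iff]
    by_cases h : 0 ≤ coeff f ∅
    exacts [Or.inl (by linarith), Or.inr (by linarith)]
  have hVI := hf.fVar_le_totalInfluence
  rw [hV] at hVI ⊢
  exact four_mul_mul_one_sub_le_two_mul_div_logb hβ₀ hβ hVI
    (hβ_def ▸ two_mul_negMulLog_min_le_log_two_mul_totalInfluence hf) hI
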